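/- For every real β > 0 and every nonempty finite family of real numbers a_1, …, a_n, if the smooth approximation of the maximum exceeds the robustness margin ε_β = ln(n)/β, i.e., (1/β)·ln(Σ_{i=1}^n e^{β a_i}) ≥ ln(n)/β, then max(a_1, …, a_n) ≥ 0 (a smooth robustness value above the margin ε_β guarantees nonnegative true robustness). -/
import Mathlib


/-- If the smooth max is at least the margin ε_β = ln(n)/β, then the true max is nonnegative. -/
theorem smooth_max_margin_sound (n : ℕ) (hn : 0 < n) (β : ℝ) (hβ : 0 < β) (a : Fin n → ℝ)
    (h : Real.log n / β ≤ (1 / β) * Real.log (∑ i : Fin n, Real.exp (β * a i))) :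
    0 ≤ Finset.univ.sup' ⟨⟨0, hn⟩, Finset.mem_univ _⟩ a := by
  set M := Finset.univ.sup' ⟨⟨0, hn⟩, Finset.mem_univ _⟩ a with hM
  have hsum_pos : 0 < ∑ i : Fin n, Real.exp (β * a i) := by
    apply Finset.sum_pos (fun i _ => Real.exp_pos _)
    exact ⟨⟨0, hn⟩, Finset.mem_univ _⟩
  have hlog : Real.log n ≤ Real.log (∑ i : Fin n, Real.exp (β * a i)) := by
    have := mul_le_mul_of_nonneg_left h (le_of_lt hβ)
    rwa [mul_div_cancel₀ _ (ne_of_gt hβ), ← mul_assoc, mul_one_div_cancel (ne_of_gt hβ),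
      one_mul] at this
  have hn1 : (1 : ℝ) ≤ n := by exact_mod_cast hn
  have hnle : (n : ℝ) ≤ ∑ i : Fin n, Real.exp (β * a i) :=
    (Real.log_le_log_iff (by positivity) hsum_pos).mp hlog
  have hsum_le : (∑ i : Fin n, Real.exp (β * a i)) ≤ n * Real.exp (β * M) := by
    calc (∑ i : Fin n, Real.exp (β * a i)) ≤ ∑ _i : Fin n, Real.exp (β * M) := by
          apply Finset.sum_le_sum
          intro i _
          exact Real.exp_le_exp.mpr (mul_le_mul_of_nonneg_left
            (Finset.le_sup' a (Finset.mem_univ i)) hβ.le)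
      _ = n * Real.exp (β * M) := by simp [Finset.sum_const, Finset.card_univ]
  have h1 : (1 : ℝ) ≤ Real.exp (β * M) := by
    have hnpos : (0 : ℝ) < n := by exact_mod_cast hn
    have := hnle.trans hsum_le
    nlinarith [Real.exp_pos (β * M)]
  have : 0 ≤ β * M := by
    by_contra hneg
    push_neg at hneg
    have := Real.exp_lt_one_iff.mpr hneg
    linarith
  exact nonneg_of_mul_nonneg_right this hβ
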